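/- Let m_o ≥ 1 and define polynomials in three real variables ξ = (ξ₁, ξ₂, ξ₃): φ₁(ξ) = He₂(ξ₂) − (1/2)(He₂(ξ₁) + He₂(ξ₃)); for k ≥ 1, φ_{2k}(ξ) = He_{2k+2}(ξ₂) and φ_{2k+1}(ξ) = (1/2)(He₂(ξ₁)·He_{2k}(ξ₂) + He_{2k}(ξ₂)·He₂(ξ₃)); ψ₁(ξ) = He₃(ξ₂) − (3/2)(He₂(ξ₁)·He₁(ξ₂) + He₁(ξ₂)·He₂(ξ₃)); for k ≥ 1, ψ_{2k}(ξ) = He_{2k+3}(ξ₂) and ψ_{2k+1}(ξ) = (1/2)(He₂(ξ₁)·He_{2k+1}(ξ₂) + He_{2k+1}(ξ₂)·He₂(ξ₃)). Let ω(ξ) = (2π)^{-3/2}·e^{-|ξ|²/2} be the standard Gaussian density on ℝ³. If r ∈ ℝ^{m_o} satisfies ∫_{ℝ³} φ_i(ξ)·ξ₂·(Σ_{j=1}^{m_o} r_j·ψ_j(ξ))·ω(ξ) dξ = 0 for every 1 ≤ i ≤ m_o, then r = 0. (This is the full-column-rank property of the matrix M₀ in the reduced moment system of the temperature jump problem.)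 -/

import Mathlib

/-!
Against the standard Gaussian density `ω₁` on `ℝ` the Hermite polynomials are orthogonal,
`∫ He_m He_n ω₁ = m! δ_mn`, and multiplication by `x` is the recurrence
`x He_n = He_{n+1} + n He_{n-1}`; hence `J(a, b) = ∫ He_a(x) x He_b(x) ω₁(x) dx` vanishes unless
`|a - b| = 1`, while `J(a, a + 1) = (a + 1)!`.
Each `φ_i` and `ψ_j` has the form `α He_p(ξ₂) + β (He₂(ξ₁) + He₂(ξ₃)) He_q(ξ₂)`. The transverse
factor `He₂(ξ₁) + He₂(ξ₃)` has Gaussian mean `0` and second moment `4`, so by Fubini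
`∫ φ_i ξ₂ ψ_j ω = α α' J(p, p') + 4 β β' J(q, q')`. Reading off the indices, this matrix is lower
triangular with positive diagonal (`9`, `(i + 3)!` for even `i`, `i!` for odd `i ≥ 3`), hence
invertible.
-/

open MeasureTheory Real

/-- The probabilist's Hermite polynomial evaluated at a real number. -/
noncomputable def He (n : ℕ) (x : ℝ) : ℝ := Polynomial.aeval x (Polynomial.hermite n)

/-- The even-parity basis polynomials `φ_i` (one-based index `i`):
`φ₁ = He₂(ξ₂) - (1/2)(He₂(ξ₁) + He₂(ξ₃))`, `φ_{2k} = He_{2k+2}(ξ₂)`,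
`φ_{2k+1} = (1/2)(He₂(ξ₁)He_{2k}(ξ₂) + He_{2k}(ξ₂)He₂(ξ₃))` for `k ≥ 1`. -/
noncomputable def phi (i : ℕ) (ξ : Fin 3 → ℝ) : ℝ :=
  if i = 1 then He 2 (ξ 1) - (1 / 2) * (He 2 (ξ 0) + He 2 (ξ 2))
  else if i % 2 = 0 then He (i + 2) (ξ 1)
  else (1 / 2) * (He 2 (ξ 0) * He (i - 1) (ξ 1) + He (i - 1) (ξ 1) * He 2 (ξ 2))

/-- The odd-parity basis polynomials `ψ_j` (one-based index `j`):
`ψ₁ = He₃(ξ₂) - (3/2)(He₂(ξ₁)He₁(ξ₂) + He₁(ξ₂)He₂(ξ₃))`, `ψ_{2k} = He_{2k+3}(ξ₂)`,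
`ψ_{2k+1} = (1/2)(He₂(ξ₁)He_{2k+1}(ξ₂) + He_{2k+1}(ξ₂)He₂(ξ₃))` for `k ≥ 1`. -/
noncomputable def psi (j : ℕ) (ξ : Fin 3 → ℝ) : ℝ :=
  if j = 1 then He 3 (ξ 1) - (3 / 2) * (He 2 (ξ 0) * He 1 (ξ 1) + He 1 (ξ 1) * He 2 (ξ 2))
  else if j % 2 = 0 then He (j + 3) (ξ 1)
  else (1 / 2) * (He 2 (ξ 0) * He j (ξ 1) + He j (ξ 1) * He 2 (ξ 2))

/-- The standard Gaussian density on `ℝ³`. -/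
noncomputable def gauss3 (ξ : Fin 3 → ℝ) : ℝ :=
  (2 * π) ^ (-(3 : ℝ) / 2) * Real.exp (-(ξ 0 ^ 2 + ξ 1 ^ 2 + ξ 2 ^ 2) / 2)

open Polynomial ProbabilityTheory
open scoped Nat

namespace Polynomial

theorem derivative_hermite_succ (n : ℕ) :
    derivative (hermite (n + 1)) = ((n : ℤ[X]) + 1) * hermite n := by
  induction n with
  | zero => simp
  | succ n ih =>
    rw [hermite_succ (n + 1), derivative_sub, derivative_mul, derivative_X, ih, derivative_mul]
    simp only [derivative_add, derivative_natCast, derivative_one, add_zero, zero_mul, zero_add]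
    push_cast
    linear_combination (-(n : ℤ[X]) - 1) * hermite_succ n

end Polynomial

theorem He_eq_eval (n : ℕ) (x : ℝ) : He n x = ((hermite n).map (Int.castRingHom ℝ)).eval x := by
  simp [He, aeval_def, eval_map]

theorem He_zero (x : ℝ) : He 0 x = 1 := by
  simp [He]

theorem hasDerivAt_He (n : ℕ) (x : ℝ) : HasDerivAt (He n) (n * He (n - 1) x) x := by
  have h := ((hermite n).map (Int.castRingHom ℝ)).hasDerivAt x
  rw [← funext (He_eq_eval n), derivative_map] at h
  cases n with
  | zero => simpa using h
  | succ n =>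
    rw [derivative_hermite_succ] at h
    simpa [He_eq_eval] using h

theorem id_mul_He (n : ℕ) (x : ℝ) : x * He n x = He (n + 1) x + n * He (n - 1) x := by
  have h := congrArg (aeval x) (hermite_succ n)
  cases n with
  | zero => simp [He]
  | succ n =>
    simp only [map_sub, map_mul, aeval_X, derivative_hermite_succ] at h
    simp only [He, h, Nat.add_sub_cancel, map_add, map_natCast, map_one]
    push_cast
    ring

theorem gaussianPDFReal_zero_one (x : ℝ) :
    gaussianPDFReal 0 1 x = (√(2 * π))⁻¹ * exp (-x ^ 2 / 2) := by
  simp [gaussianPDFReal]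

theorem hasDerivAt_gaussianPDFReal_zero_one (x : ℝ) :
    HasDerivAt (gaussianPDFReal 0 1) (-x * gaussianPDFReal 0 1 x) x := by
  have h : HasDerivAt (fun y : ℝ => -y ^ 2 / 2) (-x) x :=
    ((hasDerivAt_pow 2 x).neg.div_const 2).congr_deriv (by ring)
  rw [show gaussianPDFReal 0 1 = fun y => (√(2 * π))⁻¹ * exp (-y ^ 2 / 2) from
    funext gaussianPDFReal_zero_one]
  refine (h.exp.const_mul _).congr_deriv ?_
  beta_reduce
  ring

theorem integrable_eval_mul_gaussianPDFReal (P : ℝ[X]) :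
    Integrable fun x => P.eval x * gaussianPDFReal 0 1 x := by
  have hmono (n : ℕ) : Integrable fun x : ℝ => x ^ n * exp (-(1 / 2) * x ^ 2) := by
    simpa [rpow_natCast] using integrable_rpow_mul_exp_neg_mul_sq (s := n) (by norm_num)
      (by linarith [n.cast_nonneg (α := ℝ)])
  induction P using Polynomial.induction_on' with
  | add p q hp hq =>
    simp only [eval_add, add_mul]
    exact hp.add hq
  | monomial n a =>
    convert (hmono n).const_mul (a * (√(2 * π))⁻¹) using 2 with x
    rw [eval_monomial, gaussianPDFReal_zero_one]
    ring_nf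

theorem hasDerivAt_He_mul_gaussianPDFReal (n : ℕ) (x : ℝ) :
    HasDerivAt (fun y => He n y * gaussianPDFReal 0 1 y)
      (-(He (n + 1) x * gaussianPDFReal 0 1 x)) x :=
  ((hasDerivAt_He n x).mul (hasDerivAt_gaussianPDFReal_zero_one x)).congr_deriv
    (by linear_combination (-gaussianPDFReal 0 1 x) * id_mul_He n x)

theorem integrable_He_mul_He (m n : ℕ) :
    Integrable fun x => He m x * He n x * gaussianPDFReal 0 1 x := by
  simpa [He_eq_eval] using integrable_eval_mul_gaussianPDFReal
    ((hermite m).map (Int.castRingHom ℝ) * (hermite n).map (Int.castRingHom ℝ))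

theorem integral_He_mul_He_succ (m n : ℕ) :
    ∫ x, He m x * He (n + 1) x * gaussianPDFReal 0 1 x =
      m * ∫ x, He (m - 1) x * He n x * gaussianPDFReal 0 1 x := by
  have parts := integral_mul_deriv_eq_deriv_mul_of_integrable
    (u := He m) (v := fun y => He n y * gaussianPDFReal 0 1 y)
    (fun x _ => hasDerivAt_He m x) (fun x _ => hasDerivAt_He_mul_gaussianPDFReal n x)
    (by simpa [Pi.mul_def, mul_assoc] using (integrable_He_mul_He m (n + 1)).neg)
    (by simpa [Pi.mul_def, mul_assoc] using (integrable_He_mul_He (m - 1) n).const_mul (m : ℝ))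
    (by simpa [Pi.mul_def, mul_assoc] using integrable_He_mul_He m n)
  simp only [mul_neg, integral_neg, neg_inj] at parts
  simp only [mul_assoc, parts, ← integral_const_mul]

theorem integral_He_mul_He (m n : ℕ) :
    ∫ x, He m x * He n x * gaussianPDFReal 0 1 x = if m = n then (m ! : ℝ) else 0 := by
  induction n generalizing m with
  | zero =>
    cases m with
    | zero => simpa [He_zero] using integral_gaussianPDFReal_eq_one 0 one_ne_zero
    | succ k =>
      simp_rw [mul_comm (He (k + 1) _), integral_He_mul_He_succ 0 k]
      simp
  | succ n ih =>
    rw [integral_He_mul_He_succ, ih]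
    cases m with
    | zero => simp
    | succ k =>
      by_cases hk : k = n
      · simp [hk, Nat.factorial_succ]
      · simp [hk]

theorem integrable_He_mul_gaussianPDFReal (n : ℕ) :
    Integrable fun x => He n x * gaussianPDFReal 0 1 x := by
  simpa [He_zero] using integrable_He_mul_He n 0

theorem integral_He_mul_gaussianPDFReal (n : ℕ) :
    ∫ x, He n x * gaussianPDFReal 0 1 x = if n = 0 then 1 else 0 := by
  have h := integral_He_mul_He n 0
  simp only [He_zero, mul_one] at h
  rcases n with _ | n <;> simpa using h

theorem integrable_He_mul_id_mul_He (a b : ℕ) :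
    Integrable fun x => He a x * x * He b x * gaussianPDFReal 0 1 x := by
  have h := integrable_eval_mul_gaussianPDFReal
    ((hermite a).map (Int.castRingHom ℝ) * X * (hermite b).map (Int.castRingHom ℝ))
  simp only [eval_mul, eval_X] at h
  simpa only [He_eq_eval] using h

theorem integrable_const_mul_He_mul_id_mul_He (c : ℝ) (a b : ℕ) :
    Integrable fun x => c * (He a x * x * He b x) * gaussianPDFReal 0 1 x := by
  simpa [mul_assoc] using (integrable_He_mul_id_mul_He a b).const_mul c

theorem integral_He_mul_id_mul_He (a b : ℕ) :
    ∫ x, He a x * x * He b x * gaussianPDFReal 0 1 x =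
      (∫ x, He a x * He (b + 1) x * gaussianPDFReal 0 1 x) +
        b * ∫ x, He a x * He (b - 1) x * gaussianPDFReal 0 1 x := by
  rw [← integral_const_mul, ← integral_add (integrable_He_mul_He a (b + 1))
    ((integrable_He_mul_He a (b - 1)).const_mul _)]
  congr 1 with x
  rw [mul_assoc (He a x), id_mul_He]
  ring

theorem integral_He_mul_id_mul_He_succ (a : ℕ) :
    ∫ x, He a x * x * He (a + 1) x * gaussianPDFReal 0 1 x = ((a + 1) ! : ℝ) := by
  have h : a ≠ a + 1 + 1 := by omega
  simp [integral_He_mul_id_mul_He, integral_He_mul_He, Nat.factorial_succ, h]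

theorem integral_He_mul_id_mul_He_eq_zero {a b : ℕ} (h₁ : a ≠ b + 1) (h₂ : b ≠ a + 1) :
    ∫ x, He a x * x * He b x * gaussianPDFReal 0 1 x = 0 := by
  rw [integral_He_mul_id_mul_He, integral_He_mul_He, integral_He_mul_He, if_neg h₁]
  rcases Nat.eq_zero_or_pos b with rfl | hb
  · simp
  · rw [if_neg (by omega)]
    simp

theorem gauss3_eq_prod (ξ : Fin 3 → ℝ) : gauss3 ξ = ∏ i, gaussianPDFReal 0 1 (ξ i) := by
  have hc : (2 * π) ^ (-(3 : ℝ) / 2) = (√(2 * π))⁻¹ ^ 3 := by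
    rw [sqrt_eq_rpow, ← rpow_neg (by positivity), ← rpow_mul_natCast (by positivity)]
    norm_num
  simp only [gauss3, Fin.prod_univ_three, gaussianPDFReal_zero_one, hc]
  rw [show -(ξ 0 ^ 2 + ξ 1 ^ 2 + ξ 2 ^ 2) / 2 = -ξ 0 ^ 2 / 2 + -ξ 1 ^ 2 / 2 + -ξ 2 ^ 2 / 2 by ring,
    exp_add, exp_add]
  ring

noncomputable def separableGauss3 (u v w : ℝ → ℝ) (ξ : Fin 3 → ℝ) : ℝ :=
  u (ξ 0) * v (ξ 1) * w (ξ 2) * gauss3 ξ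

theorem separableGauss3_eq_prod (u v w : ℝ → ℝ) :
    separableGauss3 u v w = fun ξ => ∏ i, ![u, v, w] i (ξ i) * gaussianPDFReal 0 1 (ξ i) := by
  ext ξ
  simp only [separableGauss3, gauss3_eq_prod, Fin.prod_univ_three]
  simp
  ring

theorem integrable_separableGauss3 {u v w : ℝ → ℝ}
    (hu : Integrable fun x => u x * gaussianPDFReal 0 1 x)
    (hv : Integrable fun x => v x * gaussianPDFReal 0 1 x)
    (hw : Integrable fun x => w x * gaussianPDFReal 0 1 x) :
    Integrable (separableGauss3 u v w) := by
  rw [separableGauss3_eq_prod]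
  exact Integrable.fintype_prod (f := fun i x => ![u, v, w] i x * gaussianPDFReal 0 1 x)
    fun i => by fin_cases i <;> assumption

theorem integral_separableGauss3 (u v w : ℝ → ℝ) :
    ∫ ξ, separableGauss3 u v w ξ = (∫ x, u x * gaussianPDFReal 0 1 x) *
      (∫ x, v x * gaussianPDFReal 0 1 x) * ∫ x, w x * gaussianPDFReal 0 1 x := by
  rw [separableGauss3_eq_prod, integral_fintype_prod_volume_eq_prod
    (fun i x => ![u, v, w] i x * gaussianPDFReal 0 1 x), Fin.prod_univ_three]
  simp

noncomputable def transverse (ξ : Fin 3 → ℝ) : ℝ := He 2 (ξ 0) + He 2 (ξ 2)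

section Transverse

variable (v₀ v₁ v₂ : ℝ → ℝ)

theorem transverse_quadratic_mul_gauss3_eq_sum :
    (fun ξ => (v₀ (ξ 1) + transverse ξ * v₁ (ξ 1) + transverse ξ ^ 2 * v₂ (ξ 1)) * gauss3 ξ) =
      fun ξ => separableGauss3 (He 0) v₀ (He 0) ξ + separableGauss3 (He 2) v₁ (He 0) ξ +
        separableGauss3 (He 0) v₁ (He 2) ξ +
        separableGauss3 (fun x => He 2 x * He 2 x) v₂ (He 0) ξ +
        2 * separableGauss3 (He 2) v₂ (He 2) ξ +
        separableGauss3 (He 0) v₂ (fun x => He 2 x * He 2 x) ξ := by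
  ext ξ
  simp only [separableGauss3, transverse, He_zero]
  ring

variable {v₀ v₁ v₂}

theorem integrable_transverse_quadratic_mul_gauss3
    (h₀ : Integrable fun x => v₀ x * gaussianPDFReal 0 1 x)
    (h₁ : Integrable fun x => v₁ x * gaussianPDFReal 0 1 x)
    (h₂ : Integrable fun x => v₂ x * gaussianPDFReal 0 1 x) :
    Integrable fun ξ => (v₀ (ξ 1) + transverse ξ * v₁ (ξ 1) + transverse ξ ^ 2 * v₂ (ξ 1)) *
      gauss3 ξ := by
  have hH := integrable_He_mul_gaussianPDFReal
  have hHH := integrable_He_mul_He 2 2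
  have := integrable_separableGauss3 (hH 0) h₀ (hH 0)
  have := integrable_separableGauss3 (hH 2) h₁ (hH 0)
  have := integrable_separableGauss3 (hH 0) h₁ (hH 2)
  have := integrable_separableGauss3 hHH h₂ (hH 0)
  have := integrable_separableGauss3 (hH 2) h₂ (hH 2)
  have := integrable_separableGauss3 (hH 0) h₂ hHH
  rw [transverse_quadratic_mul_gauss3_eq_sum]
  fun_prop

theorem integral_transverse_quadratic_mul_gauss3
    (h₀ : Integrable fun x => v₀ x * gaussianPDFReal 0 1 x)
    (h₁ : Integrable fun x => v₁ x * gaussianPDFReal 0 1 x)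
    (h₂ : Integrable fun x => v₂ x * gaussianPDFReal 0 1 x) :
    ∫ ξ, (v₀ (ξ 1) + transverse ξ * v₁ (ξ 1) + transverse ξ ^ 2 * v₂ (ξ 1)) * gauss3 ξ =
      (∫ x, v₀ x * gaussianPDFReal 0 1 x) + 4 * ∫ x, v₂ x * gaussianPDFReal 0 1 x := by
  have hH := integrable_He_mul_gaussianPDFReal
  have hHH := integrable_He_mul_He 2 2
  have := integrable_separableGauss3 (hH 0) h₀ (hH 0)
  have := integrable_separableGauss3 (hH 2) h₁ (hH 0)
  have := integrable_separableGauss3 (hH 0) h₁ (hH 2)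
  have := integrable_separableGauss3 hHH h₂ (hH 0)
  have := integrable_separableGauss3 (hH 2) h₂ (hH 2)
  have := integrable_separableGauss3 (hH 0) h₂ hHH
  rw [transverse_quadratic_mul_gauss3_eq_sum]
  rw [integral_add (by fun_prop) (by fun_prop), integral_add (by fun_prop) (by fun_prop),
    integral_add (by fun_prop) (by fun_prop), integral_add (by fun_prop) (by fun_prop),
    integral_add (by fun_prop) (by fun_prop), integral_const_mul]
  simp only [integral_separableGauss3, integral_He_mul_gaussianPDFReal, integral_He_mul_He]
  norm_num
  ring

end Transverse

/-- `α He_p(ξ₂) + β (He₂(ξ₁) + He₂(ξ₃)) He_q(ξ₂)`, the common shape of all `φ_i` and `ψ_j`. -/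
structure HermiteMix where
  α : ℝ
  β : ℝ
  p : ℕ
  q : ℕ

namespace HermiteMix

noncomputable def eval (A : HermiteMix) (ξ : Fin 3 → ℝ) : ℝ :=
  A.α * He A.p (ξ 1) + A.β * transverse ξ * He A.q (ξ 1)

variable (A B : HermiteMix)

theorem eval_mul_id_mul_eval (ξ : Fin 3 → ℝ) :
    A.eval ξ * ξ 1 * B.eval ξ =
      A.α * B.α * (He A.p (ξ 1) * ξ 1 * He B.p (ξ 1)) +
        transverse ξ * (A.α * B.β * (He A.p (ξ 1) * ξ 1 * He B.q (ξ 1)) +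
          A.β * B.α * (He A.q (ξ 1) * ξ 1 * He B.p (ξ 1))) +
        transverse ξ ^ 2 * (A.β * B.β * (He A.q (ξ 1) * ξ 1 * He B.q (ξ 1))) := by
  simp only [eval]
  ring

theorem integrable_crossTerm_mul_gaussianPDFReal :
    Integrable fun x => (A.α * B.β * (He A.p x * x * He B.q x) +
      A.β * B.α * (He A.q x * x * He B.p x)) * gaussianPDFReal 0 1 x := by
  simp only [add_mul]
  exact (integrable_const_mul_He_mul_id_mul_He _ A.p B.q).add
    (integrable_const_mul_He_mul_id_mul_He _ A.q B.p)

theorem integrable_eval_mul_id_mul_eval :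
    Integrable fun ξ => A.eval ξ * ξ 1 * B.eval ξ * gauss3 ξ := by
  simp only [eval_mul_id_mul_eval]
  exact integrable_transverse_quadratic_mul_gauss3
    (integrable_const_mul_He_mul_id_mul_He _ _ _) (integrable_crossTerm_mul_gaussianPDFReal A B)
    (integrable_const_mul_He_mul_id_mul_He _ _ _)

theorem integral_eval_mul_id_mul_eval :
    ∫ ξ, A.eval ξ * ξ 1 * B.eval ξ * gauss3 ξ =
      A.α * B.α * (∫ x, He A.p x * x * He B.p x * gaussianPDFReal 0 1 x) +
        4 * (A.β * B.β) * ∫ x, He A.q x * x * He B.q x * gaussianPDFReal 0 1 x := by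
  simp only [eval_mul_id_mul_eval]
  refine (integral_transverse_quadratic_mul_gauss3
    (integrable_const_mul_He_mul_id_mul_He _ _ _) (integrable_crossTerm_mul_gaussianPDFReal A B)
    (integrable_const_mul_He_mul_id_mul_He _ _ _)).trans ?_
  simp only [mul_assoc, integral_const_mul]

end HermiteMix

noncomputable def phiMix (i : ℕ) : HermiteMix :=
  if i = 1 then ⟨1, -1 / 2, 2, 0⟩ else if i % 2 = 0 then ⟨1, 0, i + 2, 0⟩ else ⟨0, 1 / 2, 0, i - 1⟩

noncomputable def psiMix (j : ℕ) : HermiteMix :=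
  if j = 1 then ⟨1, -3 / 2, 3, 1⟩ else if j % 2 = 0 then ⟨1, 0, j + 3, 0⟩ else ⟨0, 1 / 2, 0, j⟩

theorem phi_eq_eval (i : ℕ) : phi i = (phiMix i).eval := by
  ext ξ
  unfold phi phiMix
  split_ifs <;> simp [HermiteMix.eval, transverse, He_zero] <;> ring

theorem psi_eq_eval (j : ℕ) : psi j = (psiMix j).eval := by
  ext ξ
  unfold psi psiMix
  split_ifs <;> simp [HermiteMix.eval, transverse] <;> ring

theorem integral_phi_mul_id_mul_psi_eq_zero {i j : ℕ} (hi : 1 ≤ i) (hij : i < j) :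
    ∫ ξ, phi i ξ * ξ 1 * psi j ξ * gauss3 ξ = 0 := by
  have hj : j ≠ 1 := by omega
  rw [phi_eq_eval, psi_eq_eval, HermiteMix.integral_eval_mul_id_mul_eval]
  simp only [phiMix, psiMix, hj, if_false]
  split_ifs <;> simp (disch := omega) [integral_He_mul_id_mul_He_eq_zero]

theorem integral_phi_mul_id_mul_psi_self_pos {i : ℕ} (hi : 1 ≤ i) :
    0 < ∫ ξ, phi i ξ * ξ 1 * psi i ξ * gauss3 ξ := by
  rw [phi_eq_eval, psi_eq_eval, HermiteMix.integral_eval_mul_id_mul_eval]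
  simp only [phiMix, psiMix]
  split_ifs
  · norm_num [integral_He_mul_id_mul_He_succ, Nat.factorial]
  · have h := integral_He_mul_id_mul_He_succ (i + 2)
    simp only [add_assoc, Nat.reduceAdd] at h
    simp only [h, mul_zero, zero_mul, add_zero, mul_one]
    positivity
  · obtain ⟨k, rfl⟩ : ∃ k, i = k + 1 := ⟨i - 1, by omega⟩
    simp only [add_tsub_cancel_right, integral_He_mul_id_mul_He_succ, mul_zero, zero_mul, zero_add]
    positivity

theorem integral_phi_mul_id_mul_sum_psi {ι : Type*} (i : ℕ) (s : Finset ι) (c : ι → ℝ)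
    (k : ι → ℕ) :
    ∫ ξ, phi i ξ * ξ 1 * (∑ j ∈ s, c j * psi (k j) ξ) * gauss3 ξ =
      ∑ j ∈ s, c j * ∫ ξ, phi i ξ * ξ 1 * psi (k j) ξ * gauss3 ξ := by
  have hint (j : ι) : Integrable fun ξ => c j * (phi i ξ * ξ 1 * psi (k j) ξ * gauss3 ξ) := by
    rw [phi_eq_eval, psi_eq_eval]
    exact (HermiteMix.integrable_eval_mul_id_mul_eval _ _).const_mul _
  simp only [← integral_const_mul]
  rw [← integral_finsetSum s fun j _ => hint j]
  congr 1 with ξ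
  simp only [Finset.mul_sum, Finset.sum_mul]
  exact Finset.sum_congr rfl fun j _ => by ring

theorem M0_full_column_rank_general (mo : ℕ) (r : Fin mo → ℝ)
    (h : ∀ i : Fin mo,
      ∫ ξ : Fin 3 → ℝ,
        phi (i.val + 1) ξ * ξ 1 * (∑ j : Fin mo, r j * psi (j.val + 1) ξ) * gauss3 ξ = 0) :
    r = 0 := by
  let M : Matrix (Fin mo) (Fin mo) ℝ :=
    Matrix.of fun i j => ∫ ξ, phi (i.val + 1) ξ * ξ 1 * psi (j.val + 1) ξ * gauss3 ξ
  have hM : M.IsLowerTriangular := fun i j hij =>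
    integral_phi_mul_id_mul_psi_eq_zero (by omega) (by simpa using hij)
  have hdet : M.det ≠ 0 := by
    rw [Matrix.det_of_isLowerTriangular M hM]
    exact Finset.prod_ne_zero_iff.2 fun i _ =>
      (integral_phi_mul_id_mul_psi_self_pos (by omega)).ne'
  refine Matrix.eq_zero_of_mulVec_eq_zero hdet (funext fun i => ?_)
  rw [Pi.zero_apply, ← h i, integral_phi_mul_id_mul_sum_psi]
  simp [M, Matrix.mulVec, dotProduct, mul_comm]

theorem M0_full_column_rank (mo : ℕ) (hmo : 1 ≤ mo) (r : Fin mo → ℝ)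
    (h : ∀ i : Fin mo,
      ∫ ξ : Fin 3 → ℝ,
        phi (i.val + 1) ξ * ξ 1 * (∑ j : Fin mo, r j * psi (j.val + 1) ξ) * gauss3 ξ = 0) :
    r = 0 :=
  M0_full_column_rank_general mo r h
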